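/- arXiv:quant-ph/0512255 — 3 statements merged into one kernel-verified Lean document; each statement's English description precedes it below -/
import Mathlib

section
/- Multinomial bounds on the symmetric-group dimension formula: let d ≥ 1 and let λ : Fin d → ℕ be nonincreasing with ∑ i, λ i = n. Set λ̃ i := λ i + (d − 1 − i) and Dim(λ) := ((n)! · ∏_{i < j} ((λ̃ i : ℝ) − λ̃ j)) / ∏ i, ((λ̃ i)! : ℝ). Then (Nat.multinomial Finset.univ λ : ℝ) ≤ (n + d)^(d·(d−1)/2) · Dim(λ) and Dim(λ) ≤ (Nat.multinomial Finset.univ λ : ℝ). (Dim(λ) is the dimension of the irreducible representation P_λ of the symmetric group S_n labelled by the partition λ.) -/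
/-- The dimension formula for the irreducible representation `P_λ` of the symmetric group
`S_n` labelled by a partition `λ` of `n` into at most `d` parts:
`n! ∏_{i<j} (λ̃ i - λ̃ j) / ∏ i (λ̃ i)!` where `λ̃ i = λ i + (d - 1 - i)`. -/
noncomputable def dimSym {d : ℕ} (n : ℕ) (lam : Fin d → ℕ) : ℝ :=
  ((Nat.factorial n : ℝ) *
      ∏ i : Fin d, ∏ j ∈ Finset.univ.filter (fun j => i < j),
        (((lam i + (d - 1 - (i : ℕ)) : ℕ) : ℝ) - ((lam j + (d - 1 - (j : ℕ)) : ℕ) : ℝ))) /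
    ∏ i : Fin d, (Nat.factorial (lam i + (d - 1 - (i : ℕ))) : ℝ)

/-- A product of distinct naturals, all at most `m`, with `k` of them, is at most
`m.descFactorial k`. -/
lemma prod_le_descFactorial : ∀ (k : ℕ) (S : Finset ℕ) (m : ℕ), S.card = k →
    (∀ x ∈ S, x ≤ m) → S.prod id ≤ m.descFactorial k := by
  intro k
  induction k with
  | zero => intro S m hc _; simp [Finset.card_eq_zero.mp hc]
  | succ k ih =>
    intro S m hc hle
    have hne : S.Nonempty := Finset.card_pos.mp (by omega)
    set x := S.max' hne with hx
    have hxS : x ∈ S := S.max'_mem hne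
    have hxm : x ≤ m := hle x hxS
    rcases Nat.eq_zero_or_pos x with h0 | hpos
    · calc S.prod id = 0 := Finset.prod_eq_zero hxS (by simp [h0])
        _ ≤ _ := Nat.zero_le _
    · obtain ⟨m', rfl⟩ : ∃ m', m = m' + 1 := ⟨m - 1, by omega⟩
      have hS' : (S.erase x).card = k := by
        rw [Finset.card_erase_of_mem hxS, hc]
        omega
      have hle' : ∀ y ∈ S.erase x, y ≤ m' := by
        intro y hy
        have hyx : y ≤ x := S.le_max' y (Finset.mem_of_mem_erase hy)
        have hne' : y ≠ x := Finset.ne_of_mem_erase hy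
        omega
      calc S.prod id = x * (S.erase x).prod id := (Finset.mul_prod_erase S id hxS).symm
        _ ≤ (m' + 1) * m'.descFactorial k := Nat.mul_le_mul hxm (ih _ _ hS' hle')
        _ = (m' + 1).descFactorial (k + 1) := (Nat.succ_descFactorial_succ m' k).symm

/-- **Multinomial bounds on the symmetric-group dimension formula.** For a partition `λ`
of `n` into at most `d` parts,
`multinomial(λ) ≤ (n+d)^{d(d-1)/2} · dim P_λ` and `dim P_λ ≤ multinomial(λ)`. -/
theorem dimSym_multinomial_bounds {d n : ℕ} (hd : 1 ≤ d)
    (lam : Fin d → ℕ) (hanti : Antitone lam) (hsum : ∑ i, lam i = n) :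
    ((Nat.multinomial Finset.univ lam : ℝ) ≤
        ((n : ℝ) + d) ^ (d * (d - 1) / 2) * dimSym n lam) ∧
      dimSym n lam ≤ (Nat.multinomial Finset.univ lam : ℝ) := by
  set L : Fin d → ℕ := fun i => lam i + (d - 1 - (i : ℕ)) with hLdef
  have hLlt : ∀ i j : Fin d, i < j → L j < L i := by
    intro i j hij
    have h1 : lam j ≤ lam i := hanti hij.le
    have h2 : (i : ℕ) < (j : ℕ) := hij
    have h3 : (j : ℕ) < d := j.2
    simp only [hLdef]
    omega
  have hLle : ∀ i : Fin d, L i ≤ n + d := by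
    intro i
    have h1 : lam i ≤ n := hsum ▸ Finset.single_le_sum (fun j _ => Nat.zero_le (lam j))
      (Finset.mem_univ i)
    have : (d - 1 - (i : ℕ)) ≤ d := by omega
    simp only [hLdef]; omega
  -- the natural-number pair product
  set P : ℕ := ∏ i : Fin d, ∏ j ∈ Finset.univ.filter (fun j => i < j), (L i - L j) with hPdef
  have hP1 : 1 ≤ P := by
    apply Finset.one_le_prod'
    intro i _
    apply Finset.one_le_prod'
    intro j hj
    have := hLlt i j (Finset.mem_filter.mp hj).2
    omega
  -- key per-index bound
  have hB : ∀ i : Fin d,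
      (lam i).factorial * ∏ j ∈ Finset.univ.filter (fun j => i < j), (L i - L j)
        ≤ (L i).factorial := by
    intro i
    set T : Finset (Fin d) := Finset.univ.filter (fun j => i < j) with hT
    have hcardT : T.card = d - 1 - (i : ℕ) := by
      have : T = Finset.Ioi i := by ext j; simp [hT]
      rw [this, Fin.card_Ioi]
    have hinj : Set.InjOn (fun j => L i - L j) T := by
      intro a ha b hb hab
      have hai := hLlt i a (Finset.mem_filter.mp ha).2
      have hbi := hLlt i b (Finset.mem_filter.mp hb).2
      have hLab : L a = L b := by simp only at hab; omega
      by_contra hne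
      rcases lt_or_gt_of_ne hne with h | h
      · have := hLlt a b h; omega
      · have := hLlt b a h; omega
    have himg : ∏ j ∈ T, (L i - L j) = (T.image (fun j => L i - L j)).prod id := by
      rw [Finset.prod_image (fun a ha b hb => hinj ha hb)]
      rfl
    have hcard : (T.image (fun j => L i - L j)).card = d - 1 - (i : ℕ) := by
      rw [Finset.card_image_of_injOn hinj, hcardT]
    have hbdd : ∀ x ∈ T.image (fun j => L i - L j), x ≤ L i := by
      intro x hx
      obtain ⟨j, _, rfl⟩ := Finset.mem_image.mp hx
      exact Nat.sub_le _ _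
    have hprod : ∏ j ∈ T, (L i - L j) ≤ (L i).descFactorial (d - 1 - (i : ℕ)) := by
      rw [himg]
      exact prod_le_descFactorial _ _ _ hcard hbdd
    have hfac : (lam i).factorial * (L i).descFactorial (d - 1 - (i : ℕ)) = (L i).factorial := by
      have hk : d - 1 - (i : ℕ) ≤ L i := by simp only [hLdef]; omega
      have := Nat.factorial_mul_descFactorial hk
      have heq : L i - (d - 1 - (i : ℕ)) = lam i := by simp only [hLdef]; omega
      rw [heq] at this
      exact this
    calc (lam i).factorial * ∏ j ∈ T, (L i - L j)
        ≤ (lam i).factorial * (L i).descFactorial (d - 1 - (i : ℕ)) :=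
          Nat.mul_le_mul_left _ hprod
      _ = (L i).factorial := hfac
  -- product version of hB
  have hBprod : (∏ i, (lam i).factorial) * P ≤ ∏ i, (L i).factorial := by
    rw [hPdef, ← Finset.prod_mul_distrib]
    exact Finset.prod_le_prod' fun i _ => hB i
  -- sum of shifts
  have hsumk : ∑ i : Fin d, (d - 1 - (i : ℕ)) = d * (d - 1) / 2 := by
    rw [Fin.sum_univ_eq_sum_range]
    have := Finset.sum_range_reflect (fun i => i) d
    have h2 : ∑ i ∈ Finset.range d, (d - 1 - i) = ∑ i ∈ Finset.range d, i := this
    rw [h2, Finset.sum_range_id]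
  -- bound ∏ L! ≤ (n+d)^D ∏ lam!
  have hC : ∏ i, (L i).factorial ≤ (n + d) ^ (d * (d - 1) / 2) * ∏ i, (lam i).factorial := by
    have hstep : ∀ i : Fin d, (L i).factorial ≤
        (lam i).factorial * (n + d) ^ (d - 1 - (i : ℕ)) := by
      intro i
      have hk : d - 1 - (i : ℕ) ≤ L i := by simp only [hLdef]; omega
      have hfac := Nat.factorial_mul_descFactorial hk
      have heq : L i - (d - 1 - (i : ℕ)) = lam i := by simp only [hLdef]; omega
      rw [heq] at hfac
      calc (L i).factorial = (lam i).factorial * (L i).descFactorial (d - 1 - (i : ℕ)) :=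
            hfac.symm
        _ ≤ (lam i).factorial * (L i) ^ (d - 1 - (i : ℕ)) :=
            Nat.mul_le_mul_left _ (Nat.descFactorial_le_pow _ _)
        _ ≤ (lam i).factorial * (n + d) ^ (d - 1 - (i : ℕ)) :=
            Nat.mul_le_mul_left _ (Nat.pow_le_pow_left (hLle i) _)
    calc ∏ i, (L i).factorial
        ≤ ∏ i, ((lam i).factorial * (n + d) ^ (d - 1 - (i : ℕ))) :=
          Finset.prod_le_prod' fun i _ => hstep i
      _ = (∏ i, (lam i).factorial) * ∏ i : Fin d, (n + d) ^ (d - 1 - (i : ℕ)) :=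
          Finset.prod_mul_distrib
      _ = (∏ i, (lam i).factorial) * (n + d) ^ (d * (d - 1) / 2) := by
          rw [Finset.prod_pow_eq_pow_sum, hsumk]
      _ = (n + d) ^ (d * (d - 1) / 2) * ∏ i, (lam i).factorial := Nat.mul_comm _ _
  -- multinomial spec
  have hspec : (∏ i, (lam i).factorial) * Nat.multinomial Finset.univ lam = n.factorial := by
    have := Nat.multinomial_spec Finset.univ lam
    rwa [hsum] at this
  -- the two natural-number inequalities
  have ineq2 : n.factorial * P ≤ Nat.multinomial Finset.univ lam * ∏ i, (L i).factorial := by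
    calc n.factorial * P = (∏ i, (lam i).factorial) * Nat.multinomial Finset.univ lam * P := by
          rw [hspec]
      _ = Nat.multinomial Finset.univ lam * ((∏ i, (lam i).factorial) * P) := by ring
      _ ≤ Nat.multinomial Finset.univ lam * ∏ i, (L i).factorial :=
          Nat.mul_le_mul_left _ hBprod
  have ineq1 : Nat.multinomial Finset.univ lam * ∏ i, (L i).factorial
      ≤ (n + d) ^ (d * (d - 1) / 2) * (n.factorial * P) := by
    calc Nat.multinomial Finset.univ lam * ∏ i, (L i).factorial
        ≤ Nat.multinomial Finset.univ lam *
            ((n + d) ^ (d * (d - 1) / 2) * ∏ i, (lam i).factorial) :=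
          Nat.mul_le_mul_left _ hC
      _ = (n + d) ^ (d * (d - 1) / 2) *
            ((∏ i, (lam i).factorial) * Nat.multinomial Finset.univ lam) := by ring
      _ = (n + d) ^ (d * (d - 1) / 2) * n.factorial := by rw [hspec]
      _ ≤ (n + d) ^ (d * (d - 1) / 2) * (n.factorial * P) := by
          apply Nat.mul_le_mul_left
          calc n.factorial = n.factorial * 1 := (Nat.mul_one _).symm
            _ ≤ n.factorial * P := Nat.mul_le_mul_left _ hP1
  -- pass to the reals
  have hFpos : (0 : ℝ) < ∏ i, ((L i).factorial : ℝ) :=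
    Finset.prod_pos fun i _ => by exact_mod_cast (L i).factorial_pos
  have hdim : dimSym n lam = ((n.factorial * P : ℕ) : ℝ) / ∏ i, ((L i).factorial : ℝ) := by
    unfold dimSym
    congr 1
    push_cast
    congr 1
    rw [hPdef]
    push_cast
    apply Finset.prod_congr rfl
    intro i _
    apply Finset.prod_congr rfl
    intro j hj
    have := hLlt i j (Finset.mem_filter.mp hj).2
    rw [Nat.cast_sub this.le]
    simp only [hLdef]
    push_cast
    ring
  constructor
  · rw [hdim]
    have hnd : ((n : ℝ) + d) = ((n + d : ℕ) : ℝ) := by push_cast; ring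
    rw [hnd, mul_div_assoc' , le_div_iff₀ hFpos]
    calc (Nat.multinomial Finset.univ lam : ℝ) * ∏ i, ((L i).factorial : ℝ)
        = ((Nat.multinomial Finset.univ lam * ∏ i, (L i).factorial : ℕ) : ℝ) := by push_cast; ring
      _ ≤ (((n + d) ^ (d * (d - 1) / 2) * (n.factorial * P) : ℕ) : ℝ) := by
          exact_mod_cast ineq1
      _ = ((n + d : ℕ) : ℝ) ^ (d * (d - 1) / 2) * ((n.factorial * P : ℕ) : ℝ) := by push_cast; ring
  · rw [hdim, div_le_iff₀ hFpos]
    calc ((n.factorial * P : ℕ) : ℝ) ≤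
          ((Nat.multinomial Finset.univ lam * ∏ i, (L i).factorial : ℕ) : ℝ) := by
          exact_mod_cast ineq2
      _ = (Nat.multinomial Finset.univ lam : ℝ) * ∏ i, ((L i).factorial : ℝ) := by
          push_cast; ring
end

section
/- Entropy bounds on the symmetric-group dimension formula: let d ≥ 1, n ≥ 1, and let λ : Fin d → ℕ be nonincreasing with ∑ i, λ i = n. Set λ̃ i := λ i + (d − 1 − i) and Dim(λ) := ((n)! · ∏_{i < j} ((λ̃ i : ℝ) − λ̃ j)) / ∏ i, ((λ̃ i)! : ℝ). Then Real.exp(n·H(λ̄)) ≤ (n + d)^(d·(d+1)/2) · Dim(λ) and Dim(λ) ≤ Real.exp(n·H(λ̄)), where H(λ̄) := ∑ i, Real.negMulLog ((λ i : ℝ)/n). -/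
open Finset Real


open Finset Real

namespace DimSymAux

lemma factorial_add_eq (a k : ℕ) :
    (a + k).factorial = a.factorial * ∏ t ∈ range k, (a + 1 + t) := by
  induction k with
  | zero => simp
  | succ k ih =>
    rw [← Nat.add_assoc, Nat.factorial_succ, ih, prod_range_succ]
    ring

lemma pow_le_exp_mul_factorial (n : ℕ) (hn : 1 ≤ n) :
    (n : ℝ) ^ n ≤ Real.exp ((n : ℝ) - 1) * n.factorial := by
  induction n with
  | zero => omega
  | succ n ih =>
    rcases Nat.eq_or_lt_of_le hn with h | h
    · simp [← h]
    · have hn1 : 1 ≤ n := by omega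
      have hnpos : (0:ℝ) < n := by exact_mod_cast hn1
      have key : ((n:ℝ) + 1) ^ n ≤ Real.exp 1 * (n:ℝ) ^ n := by
        have h1 : (n:ℝ) + 1 ≤ (n:ℝ) * Real.exp (1 / n) := by
          have := Real.add_one_le_exp (1 / (n:ℝ))
          calc (n:ℝ) + 1 = (n:ℝ) * (1/(n:ℝ) + 1) := by field_simp; ring
            _ ≤ (n:ℝ) * Real.exp (1/(n:ℝ)) := by
                exact mul_le_mul_of_nonneg_left this hnpos.le
        calc ((n:ℝ) + 1) ^ n ≤ ((n:ℝ) * Real.exp (1 / n)) ^ n := by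
              exact pow_le_pow_left₀ (by positivity) h1 n
          _ = (n:ℝ) ^ n * Real.exp (1/n) ^ n := by rw [mul_pow]
          _ = (n:ℝ) ^ n * Real.exp ((n:ℝ) * (1/n)) := by rw [Real.exp_nat_mul]
          _ = (n:ℝ) ^ n * Real.exp 1 := by
              rw [mul_one_div, div_self hnpos.ne']
          _ = Real.exp 1 * (n:ℝ) ^ n := by ring
      have ihh := ih hn1
      have hfac : (0:ℝ) < n.factorial := by positivity
      calc ((n + 1 : ℕ):ℝ) ^ (n+1) = ((n:ℝ)+1) * ((n:ℝ)+1)^n := by push_cast; ring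
        _ ≤ ((n:ℝ)+1) * (Real.exp 1 * (n:ℝ)^n) := by
            exact mul_le_mul_of_nonneg_left key (by positivity)
        _ ≤ ((n:ℝ)+1) * (Real.exp 1 * (Real.exp ((n:ℝ)-1) * n.factorial)) := by
            have := mul_le_mul_of_nonneg_left ihh (Real.exp_pos 1).le
            exact mul_le_mul_of_nonneg_left this (by positivity)
        _ = Real.exp (((n+1:ℕ):ℝ) - 1) * ((n+1:ℕ).factorial) := by
            rw [Nat.factorial_succ]
            push_cast
            rw [show ((n:ℝ) + 1 - 1) = 1 + ((n:ℝ) - 1) by ring, Real.exp_add]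
            ring
      done

lemma factorial_le_stirling (k : ℕ) (hk : 1 ≤ k) :
    (k.factorial : ℝ) ≤ Real.exp 1 * Real.sqrt k * ((k:ℝ) ^ k * Real.exp (-(k:ℝ))) := by
  have hpos : 0 < Stirling.stirlingSeq k := by
    obtain ⟨k, rfl⟩ := Nat.exists_eq_add_of_le hk
    simpa [Nat.add_comm] using Stirling.stirlingSeq'_pos k
  have hmono : Stirling.stirlingSeq k ≤ Stirling.stirlingSeq 1 := by
    have h := Stirling.log_stirlingSeq'_antitone (Nat.zero_le (k - 1))
    simp only [Function.comp, Nat.succ_eq_add_one, zero_add] at h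
    rw [show k - 1 + 1 = k by omega] at h
    exact (Real.log_le_log_iff hpos (Stirling.stirlingSeq'_pos 0 |>.trans_eq (by norm_num))).mp h
  have hden : (0:ℝ) < Real.sqrt (2 * k) * ((k:ℝ) / Real.exp 1) ^ k := by
    have : (0:ℝ) < (k:ℝ) := by exact_mod_cast hk
    positivity
  have hfac : (k.factorial : ℝ) = Stirling.stirlingSeq k * (Real.sqrt (2 * k) * ((k:ℝ) / Real.exp 1) ^ k) := by
    rw [Stirling.stirlingSeq, div_mul_cancel₀ _ hden.ne']
  rw [hfac]
  have hb : Stirling.stirlingSeq k * (Real.sqrt (2 * k) * ((k:ℝ) / Real.exp 1) ^ k) ≤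
      Stirling.stirlingSeq 1 * (Real.sqrt (2 * k) * ((k:ℝ) / Real.exp 1) ^ k) :=
    mul_le_mul_of_nonneg_right hmono hden.le
  refine hb.trans_eq ?_
  rw [Stirling.stirlingSeq_one]
  rw [Real.sqrt_mul (by norm_num) (k:ℝ), div_pow]
  have hek : Real.exp 1 ^ k = Real.exp (k : ℝ) := by
    rw [← Real.exp_nat_mul, mul_one]
  rw [hek, Real.exp_neg]
  have h2 : Real.sqrt 2 ≠ 0 := by positivity
  field_simp

lemma exp_sqrt_le (x : ℝ) (hx : 0 ≤ x) : Real.exp 1 * Real.sqrt x ≤ x + 2 := by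
  have hs := Real.sq_sqrt hx
  have hsn := Real.sqrt_nonneg x
  have he : Real.exp 1 < 2.7182818286 := Real.exp_one_lt_d9
  nlinarith [sq_nonneg (Real.sqrt x - 1.36), Real.exp_pos 1]

end DimSymAux


namespace DimSymAux2

lemma prod_filter_gt_eq {d : ℕ} (i : Fin d) (g : Fin d → ℕ) (f : ℕ → ℕ)
    (h : ∀ j : Fin d, i < j → g j = f ((j:ℕ) - (i:ℕ) - 1)) :
    ∏ j ∈ Finset.univ.filter (fun j => i < j), g j = ∏ t ∈ range (d - 1 - (i:ℕ)), f t := by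
  refine Finset.prod_bij' (fun j _ => (j:ℕ) - (i:ℕ) - 1)
    (fun t ht => (⟨(i:ℕ) + t + 1, ?_⟩ : Fin d)) ?_ ?_ ?_ ?_ ?_
  · rw [mem_range] at ht; omega
  · intro j hj
    rw [mem_filter] at hj
    have : (i:ℕ) < (j:ℕ) := hj.2
    have := j.isLt
    simp only [mem_range]; omega
  · intro t ht
    rw [mem_range] at ht
    rw [mem_filter]
    refine ⟨mem_univ _, ?_⟩
    rw [Fin.lt_def]
    simp
  · intro j hj
    rw [mem_filter] at hj
    have : (i:ℕ) < (j:ℕ) := hj.2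
    apply Fin.ext
    simp; omega
  · intro t ht
    rw [mem_range] at ht
    simp; omega
  · intro j hj
    rw [mem_filter] at hj
    exact h j hj.2

lemma card_filter_gt {d : ℕ} (i : Fin d) :
    (Finset.univ.filter (fun j => i < j)).card = d - 1 - (i:ℕ) := by
  rw [← card_range (d - 1 - (i:ℕ))]
  apply Finset.card_bij (fun (j : Fin d) _ => (j:ℕ) - (i:ℕ) - 1)
  · intro j hj
    rw [mem_filter] at hj
    have : (i:ℕ) < (j:ℕ) := hj.2
    have := j.isLt
    simp only [mem_range]; omega
  · intro a ha b hb hab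
    rw [mem_filter] at ha hb
    have ha2 : (i:ℕ) < (a:ℕ) := ha.2
    have hb2 : (i:ℕ) < (b:ℕ) := hb.2
    apply Fin.ext; omega
  · intro t ht
    rw [mem_range] at ht
    refine ⟨⟨(i:ℕ) + t + 1, by omega⟩, ?_, by simp; omega⟩
    rw [mem_filter]
    refine ⟨mem_univ _, ?_⟩
    rw [Fin.lt_def]; simp

end DimSymAux2

/-- **Entropy bounds on the symmetric-group dimension formula.** For a partition `λ` of
`n ≥ 1` into at most `d` parts,
`exp(n H(λ̄)) ≤ (n+d)^{d(d+1)/2} · dim P_λ` and `dim P_λ ≤ exp(n H(λ̄))`. -/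
theorem dimSym_entropy_bounds {d n : ℕ} (hd : 1 ≤ d) (hn : 1 ≤ n)
    (lam : Fin d → ℕ) (hanti : Antitone lam) (hsum : ∑ i, lam i = n) :
    (Real.exp ((n : ℝ) * ∑ i, Real.negMulLog ((lam i : ℝ) / n)) ≤
        ((n : ℝ) + d) ^ (d * (d + 1) / 2) * dimSym n lam) ∧
      dimSym n lam ≤ Real.exp ((n : ℝ) * ∑ i, Real.negMulLog ((lam i : ℝ) / n)) := by
  classical
  have hlam_le : ∀ i, lam i ≤ n := fun i => by
    rw [← hsum]; exact Finset.single_le_sum (fun _ _ => Nat.zero_le _) (Finset.mem_univ i)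
  set lt : Fin d → ℕ := fun i => lam i + (d - 1 - (i : ℕ)) with hltdef
  have hltanti : ∀ i j : Fin d, i < j → lt j < lt i := by
    intro i j hij
    have h1 : lam j ≤ lam i := hanti hij.le
    have h2 : (j : ℕ) < d := j.isLt
    have h3 : (i : ℕ) < (j : ℕ) := hij
    simp only [hltdef]; omega
  set P : Fin d → ℕ := fun i => ∏ j ∈ Finset.univ.filter (fun j => i < j), (lt i - lt j) with hPdef
  set V : ℕ := ∏ i, P i with hVdef
  set F : ℕ := ∏ i, (lt i).factorial with hFdef
  set L : ℕ := ∏ i, (lam i).factorial with hLdef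
  set Qn : ℕ := ∏ i, (lam i) ^ (lam i) with hQdef
  have hfact_lt : ∀ i : Fin d, (lt i).factorial
      = (lam i).factorial * ∏ t ∈ range (d - 1 - (i : ℕ)), (lam i + 1 + t) := by
    intro i
    simp only [hltdef]
    exact DimSymAux.factorial_add_eq _ _
  have hup : ∀ i : Fin d, (lam i).factorial * P i ≤ (lt i).factorial := by
    intro i
    have h2 : P i ≤ ∏ j ∈ Finset.univ.filter (fun j => i < j),
        (lam i + 1 + ((j : ℕ) - (i : ℕ) - 1)) := by
      rw [hPdef]
      apply Finset.prod_le_prod'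
      intro j hj
      rw [mem_filter] at hj
      have hij : (i : ℕ) < (j : ℕ) := hj.2
      have hjd := j.isLt
      have hlj : lam j ≤ lam i := hanti hj.2.le
      simp only [hltdef]
      omega
    have h3 : ∏ j ∈ Finset.univ.filter (fun j => i < j),
        (lam i + 1 + ((j : ℕ) - (i : ℕ) - 1))
        = ∏ t ∈ range (d - 1 - (i : ℕ)), (lam i + 1 + t) :=
      DimSymAux2.prod_filter_gt_eq i _ (fun t => lam i + 1 + t) (fun j hj => rfl)
    rw [hfact_lt i]
    exact Nat.mul_le_mul_left _ (h2.trans_eq h3)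
  have hlow : ∀ i : Fin d, (lt i).factorial ≤ (lam i).factorial * (n + d) ^ (d - 1 - (i : ℕ)) := by
    intro i
    rw [hfact_lt i]
    apply Nat.mul_le_mul_left
    calc ∏ t ∈ range (d - 1 - (i : ℕ)), (lam i + 1 + t)
        ≤ ∏ _t ∈ range (d - 1 - (i : ℕ)), (n + d) := by
          apply Finset.prod_le_prod'
          intro t ht
          rw [mem_range] at ht
          have := hlam_le i
          omega
      _ = (n + d) ^ (d - 1 - (i : ℕ)) := by rw [prod_const, card_range]
  have hP1 : ∀ i, 1 ≤ P i := by
    intro i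
    rw [hPdef]
    apply Finset.one_le_prod'
    intro j hj
    rw [mem_filter] at hj
    have := hltanti i j hj.2
    omega
  have hLV : L * V ≤ F := by
    rw [hLdef, hVdef, hFdef, ← prod_mul_distrib]
    exact Finset.prod_le_prod' fun i _ => hup i
  have hsum_exp : ∑ i : Fin d, (d - 1 - (i : ℕ)) = d * (d - 1) / 2 := by
    rw [Fin.sum_univ_eq_sum_range (fun i => d - 1 - i) d]
    rw [Finset.sum_range_reflect (fun i => i) d]
    exact Finset.sum_range_id d
  have hFle : F ≤ L * (n + d) ^ (d * (d - 1) / 2) := by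
    calc F ≤ ∏ i : Fin d, ((lam i).factorial * (n + d) ^ (d - 1 - (i : ℕ))) :=
          Finset.prod_le_prod' fun i _ => hlow i
      _ = L * ∏ i : Fin d, (n + d) ^ (d - 1 - (i : ℕ)) := by rw [prod_mul_distrib]
      _ = L * (n + d) ^ (∑ i : Fin d, (d - 1 - (i : ℕ))) := by rw [prod_pow_eq_pow_sum]
      _ = L * (n + d) ^ (d * (d - 1) / 2) := by rw [hsum_exp]
  have hV1 : 1 ≤ V := Finset.one_le_prod' fun i _ => hP1 i
  have hmult : n.factorial * Qn ≤ n ^ n * L := by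
    have hspec : L * Nat.multinomial Finset.univ lam = n.factorial := by
      rw [hLdef]
      rw [Nat.multinomial_spec Finset.univ lam, hsum]
    have hpow : (n : ℕ) ^ n = ∑ k ∈ Finset.piAntidiag Finset.univ n,
        Nat.multinomial Finset.univ k * ∏ i, lam i ^ k i := by
      have := Finset.sum_pow_eq_sum_piAntidiag (Finset.univ : Finset (Fin d)) lam n
      rw [hsum] at this
      simpa using this
    have hmem : lam ∈ Finset.piAntidiag (Finset.univ : Finset (Fin d)) n := by
      rw [Finset.mem_piAntidiag]
      exact ⟨hsum, fun i _ => Finset.mem_univ i⟩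
    have hsingle : Nat.multinomial Finset.univ lam * Qn ≤ n ^ n := by
      rw [hpow, hQdef]
      exact Finset.single_le_sum (f := fun k => Nat.multinomial Finset.univ k * ∏ i, lam i ^ k i)
        (fun _ _ => Nat.zero_le _) hmem
    calc n.factorial * Qn = L * (Nat.multinomial Finset.univ lam * Qn) := by
          rw [← hspec]; ring
      _ ≤ L * (n ^ n) := Nat.mul_le_mul_left _ hsingle
      _ = n ^ n * L := Nat.mul_comm _ _
  have hn0 : (0:ℝ) < n := by exact_mod_cast hn
  set Q : ℝ := ∏ i, ((lam i : ℝ)) ^ (lam i) with hQrdef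
  have hQcast : Q = (Qn : ℝ) := by rw [hQrdef, hQdef]; push_cast; rfl
  have hQn1 : 1 ≤ Qn := by
    rw [hQdef]
    apply Finset.one_le_prod'
    intro i _
    rcases Nat.eq_zero_or_pos (lam i) with h | h
    · simp [h]
    · exact Nat.one_le_pow _ _ h
  have hQ1 : (1:ℝ) ≤ Q := by rw [hQcast]; exact_mod_cast hQn1
  have hQ0 : (0:ℝ) < Q := lt_of_lt_of_le one_pos hQ1
  have hcs : (∑ i, (lam i : ℝ)) = (n : ℝ) := by exact_mod_cast hsum
  -- entropy identity
  have hE : Real.exp ((n : ℝ) * ∑ i, Real.negMulLog ((lam i : ℝ) / n)) = (n:ℝ)^n / Q := by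
    have hterm : ∀ i : Fin d, (n:ℝ) * Real.negMulLog ((lam i : ℝ)/n)
        = (lam i : ℝ) * Real.log n - (lam i : ℝ) * Real.log (lam i) := by
      intro i
      rcases Nat.eq_zero_or_pos (lam i) with h | h
      · simp [h, Real.negMulLog]
      · have hpos : (0:ℝ) < lam i := by exact_mod_cast h
        rw [Real.negMulLog, Real.log_div hpos.ne' hn0.ne']
        field_simp
        ring
    have hsum2 : (n:ℝ) * ∑ i, Real.negMulLog ((lam i:ℝ)/n)
        = (n:ℝ) * Real.log n - ∑ i, (lam i : ℝ) * Real.log (lam i) := by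
      rw [Finset.mul_sum]
      rw [Finset.sum_congr rfl fun i _ => hterm i]
      rw [Finset.sum_sub_distrib, ← Finset.sum_mul, hcs]
    rw [hsum2, Real.exp_sub]
    congr 1
    · rw [Real.exp_nat_mul, Real.exp_log hn0]
    · rw [Real.exp_sum, hQrdef]
      apply Finset.prod_congr rfl
      intro i _
      rcases Nat.eq_zero_or_pos (lam i) with h | h
      · simp [h]
      · have hpos : (0:ℝ) < lam i := by exact_mod_cast h
        rw [Real.exp_nat_mul, Real.exp_log hpos]
  -- support set
  set s : Finset (Fin d) := Finset.univ.filter (fun i => lam i ≠ 0) with hsdef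
  set m : ℕ := s.card with hmdef
  have hm1 : 1 ≤ m := by
    have hex : ∃ i, lam i ≠ 0 := by
      by_contra hall
      push_neg at hall
      rw [Finset.sum_congr rfl fun i _ => hall i] at hsum
      simp at hsum
      omega
    obtain ⟨i, hi⟩ := hex
    have hmem : i ∈ s := by rw [hsdef, mem_filter]; exact ⟨mem_univ _, hi⟩
    rw [hmdef]
    exact Finset.card_pos.mpr ⟨i, hmem⟩
  have hmd : m ≤ d := by
    rw [hmdef, hsdef]
    calc (Finset.univ.filter (fun i => lam i ≠ 0)).card ≤ (Finset.univ : Finset (Fin d)).card :=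
          Finset.card_filter_le _ _
      _ = d := by simp
  have hsum_s : ∑ i ∈ s, (lam i : ℝ) = (n : ℝ) := by
    have h1 : ∑ i ∈ s, lam i = n := by
      rw [hsdef, Finset.sum_filter_ne_zero]
      exact hsum
    exact_mod_cast h1
  have hLs : (L:ℝ) = ∏ i ∈ s, ((lam i).factorial : ℝ) := by
    rw [hLdef]
    push_cast
    symm
    apply Finset.prod_subset (Finset.subset_univ s)
    intro i _ hi
    rw [hsdef, mem_filter] at hi
    push_neg at hi
    have : lam i = 0 := hi (mem_univ i)
    simp [this]
  have hQs : Q = ∏ i ∈ s, ((lam i : ℝ)) ^ (lam i) := by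
    rw [hQrdef]
    symm
    apply Finset.prod_subset (Finset.subset_univ s)
    intro i _ hi
    rw [hsdef, mem_filter] at hi
    push_neg at hi
    have : lam i = 0 := hi (mem_univ i)
    simp [this]
  set Sr : ℝ := ∏ i ∈ s, Real.sqrt (lam i) with hSrdef
  have hSr0 : 0 ≤ Sr := by
    rw [hSrdef]; exact Finset.prod_nonneg fun i _ => Real.sqrt_nonneg _
  have hL2 : (L:ℝ) ≤ Real.exp 1 ^ m * Sr * (Q * Real.exp (-(n:ℝ))) := by
    rw [hLs]
    calc ∏ i ∈ s, ((lam i).factorial:ℝ)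
        ≤ ∏ i ∈ s, (Real.exp 1 * Real.sqrt (lam i) * ((lam i:ℝ)^(lam i) * Real.exp (-(lam i:ℝ)))) := by
          apply Finset.prod_le_prod (fun i _ => by positivity)
          intro i hi
          apply DimSymAux.factorial_le_stirling
          rw [hsdef, mem_filter] at hi
          omega
      _ = ((∏ _i ∈ s, Real.exp 1) * ∏ i ∈ s, Real.sqrt (lam i)) *
            ((∏ i ∈ s, (lam i:ℝ)^(lam i)) * ∏ i ∈ s, Real.exp (-(lam i:ℝ))) := by
          rw [← Finset.prod_mul_distrib, ← Finset.prod_mul_distrib, ← Finset.prod_mul_distrib]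
      _ = Real.exp 1 ^ m * Sr * (Q * Real.exp (-(n:ℝ))) := by
          rw [Finset.prod_const, ← hmdef, ← hSrdef, ← hQs, ← Real.exp_sum]
          congr 3
          rw [Finset.sum_neg_distrib, hsum_s]
  have hb : ∏ i ∈ s, (Real.exp 1 * Real.sqrt (lam i)) ≤ ((n:ℝ)+2)^m := by
    calc ∏ i ∈ s, (Real.exp 1 * Real.sqrt (lam i)) ≤ ∏ _i ∈ s, ((n:ℝ)+2) := by
          apply Finset.prod_le_prod (fun i _ => by positivity)
          intro i _
          refine (DimSymAux.exp_sqrt_le (lam i) (Nat.cast_nonneg _)).trans ?_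
          have : (lam i : ℝ) ≤ n := by exact_mod_cast hlam_le i
          linarith
      _ = ((n:ℝ)+2)^m := by rw [Finset.prod_const, hmdef]
  have hC2 : Real.exp ((m:ℝ) - 1) * Sr ≤ ((n:ℝ) + d)^d := by
    have hstep : Real.exp ((m:ℝ)-1) * Sr
        = Real.exp (-1) * ∏ i ∈ s, (Real.exp 1 * Real.sqrt (lam i)) := by
      rw [Finset.prod_mul_distrib, Finset.prod_const, ← hSrdef, ← hmdef]
      rw [show Real.exp 1 ^ m = Real.exp (m:ℝ) by rw [← Real.exp_nat_mul, mul_one]]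
      rw [← mul_assoc, ← Real.exp_add]
      congr 2
      ring
    rw [hstep]
    rcases eq_or_lt_of_le hd with hd1 | hd2
    · have hm : m = 1 := by omega
      calc Real.exp (-1) * ∏ i ∈ s, (Real.exp 1 * Real.sqrt (lam i))
          ≤ Real.exp (-1) * ((n:ℝ)+2)^m := by
            apply mul_le_mul_of_nonneg_left hb (Real.exp_pos _).le
        _ = ((n:ℝ)+2) / Real.exp 1 := by rw [hm, pow_one, Real.exp_neg]; ring
        _ ≤ (n:ℝ)+1 := by
            rw [div_le_iff₀ (Real.exp_pos 1)]
            nlinarith [Real.exp_one_gt_d9, hn0]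
        _ ≤ ((n:ℝ)+d)^d := by
            rw [← hd1, pow_one]
            norm_num
      done
    · have h2d : (2:ℝ) ≤ d := by exact_mod_cast hd2
      have hprod0 : 0 ≤ ∏ i ∈ s, (Real.exp 1 * Real.sqrt (lam i)) :=
        Finset.prod_nonneg fun i _ => by positivity
      calc Real.exp (-1) * ∏ i ∈ s, (Real.exp 1 * Real.sqrt (lam i))
          ≤ 1 * ((n:ℝ)+2)^m := by
            apply mul_le_mul (Real.exp_lt_one_iff.mpr (by norm_num)).le hb hprod0 zero_le_one
        _ = ((n:ℝ)+2)^m := one_mul _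
        _ ≤ ((n:ℝ)+d)^m := by
            apply pow_le_pow_left₀ (by positivity)
            linarith
        _ ≤ ((n:ℝ)+d)^d := by
            apply pow_le_pow_right₀ (by linarith) hmd
  have hDreal : (n:ℝ)^n * L ≤ ((n:ℝ)+d)^d * n.factorial * Q := by
    calc (n:ℝ)^n * L
        ≤ (Real.exp ((n:ℝ)-1) * n.factorial) * (Real.exp 1 ^ m * Sr * (Q * Real.exp (-(n:ℝ)))) := by
          apply mul_le_mul (DimSymAux.pow_le_exp_mul_factorial n hn) hL2 (Nat.cast_nonneg _)
            (by positivity)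
      _ = ((n.factorial:ℝ) * Q) * (Real.exp ((n:ℝ)-1) * Real.exp 1 ^ m * Real.exp (-(n:ℝ)) * Sr) := by
          ring
      _ = ((n.factorial:ℝ) * Q) * (Real.exp ((m:ℝ)-1) * Sr) := by
          rw [show Real.exp 1 ^ m = Real.exp (m:ℝ) by rw [← Real.exp_nat_mul, mul_one]]
          rw [← Real.exp_add, ← Real.exp_add]
          congr 3
          ring
      _ ≤ ((n.factorial:ℝ) * Q) * (((n:ℝ)+d)^d) := by
          apply mul_le_mul_of_nonneg_left hC2
          exact mul_nonneg (Nat.cast_nonneg _) hQ0.le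
      _ = ((n:ℝ)+d)^d * n.factorial * Q := by ring
  -- rewrite dimSym with natural-number quantities
  have hnum : ∏ i : Fin d, ∏ j ∈ Finset.univ.filter (fun j => i < j),
      (((lam i + (d - 1 - (i : ℕ)) : ℕ) : ℝ) - ((lam j + (d - 1 - (j : ℕ)) : ℕ) : ℝ))
      = (V : ℝ) := by
    rw [hVdef, Nat.cast_prod]
    apply Finset.prod_congr rfl
    intro i _
    rw [hPdef, Nat.cast_prod]
    apply Finset.prod_congr rfl
    intro j hj
    rw [mem_filter] at hj
    rw [Nat.cast_sub (hltanti i j hj.2).le]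
  have hden : ∏ i : Fin d, ((Nat.factorial (lam i + (d - 1 - (i : ℕ)))) : ℝ) = (F : ℝ) := by
    rw [hFdef, Nat.cast_prod]
  have hdim' : dimSym n lam = ((n.factorial : ℝ) * (V : ℝ)) / (F : ℝ) := by
    unfold dimSym
    rw [hnum, hden]
  have hF1 : 1 ≤ F := Finset.one_le_prod' fun i _ => (lt i).factorial_pos
  have hF0 : (0:ℝ) < (F : ℝ) := by exact_mod_cast hF1
  have hT : d * (d + 1) / 2 = d + d * (d - 1) / 2 := by
    obtain ⟨k, rfl⟩ := Nat.exists_eq_add_of_le hd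
    obtain ⟨c, hc⟩ := Nat.even_mul_succ_self k
    have e1 : (1 + k) * (1 + k + 1) = k * (k + 1) + 2 * (1 + k) := by ring
    have e2 : (1 + k) * (1 + k - 1) = k * (k + 1) := by
      rw [show 1 + k - 1 = k by omega]; ring
    rw [e1, e2, hc]
    omega
  constructor
  · -- lower bound
    rw [hdim', hE, ← mul_div_assoc, div_le_div_iff₀ hQ0 hF0]
    have hFleR : (F : ℝ) ≤ (L : ℝ) * ((n:ℝ) + (d:ℝ)) ^ (d * (d - 1) / 2) := by
      exact_mod_cast hFle
    have hV1R : (1:ℝ) ≤ (V : ℝ) := by exact_mod_cast hV1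
    calc (n:ℝ)^n * F
        ≤ (n:ℝ)^n * ((L : ℝ) * ((n:ℝ) + d) ^ (d * (d - 1) / 2)) :=
          mul_le_mul_of_nonneg_left hFleR (by positivity)
      _ = ((n:ℝ)^n * L) * ((n:ℝ) + d) ^ (d * (d - 1) / 2) := by ring
      _ ≤ (((n:ℝ) + d)^d * n.factorial * Q) * ((n:ℝ) + d) ^ (d * (d - 1) / 2) :=
          mul_le_mul_of_nonneg_right hDreal (by positivity)
      _ = ((n:ℝ) + d) ^ (d + d * (d - 1) / 2) * ((n.factorial : ℝ) * 1) * Q := by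
          rw [pow_add]; ring
      _ ≤ ((n:ℝ) + d) ^ (d * (d + 1) / 2) * ((n.factorial : ℝ) * V) * Q := by
          rw [hT]
          apply mul_le_mul_of_nonneg_right _ hQ0.le
          apply mul_le_mul_of_nonneg_left _ (by positivity)
          exact mul_le_mul_of_nonneg_left hV1R (Nat.cast_nonneg _)
  · -- upper bound
    rw [hdim', hE, div_le_div_iff₀ hF0 hQ0, hQcast]
    have hnat : n.factorial * V * Qn ≤ n ^ n * F := by
      calc n.factorial * V * Qn = (n.factorial * Qn) * V := by ring
        _ ≤ (n ^ n * L) * V := Nat.mul_le_mul_right _ hmult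
        _ = n ^ n * (L * V) := by ring
        _ ≤ n ^ n * F := Nat.mul_le_mul_left _ hLV
    exact_mod_cast hnat
end

section
/- Monomials in a nonincreasing nonnegative vector are monotone under majorization of the exponents: let r : Fin d → ℝ be nonincreasing with 0 ≤ r i for all i, and let μ, λ : Fin d → ℕ satisfy ∑_{i ≤ c} μ i ≤ ∑_{i ≤ c} λ i for every c : Fin d, with ∑ i, μ i = ∑ i, λ i. Then ∏ i, (r i)^(μ i) ≤ ∏ i, (r i)^(λ i). (This is the fact that, for a density matrix with nonincreasing spectrum r, the largest eigenvalue r^λ of the irreducible block q_λ(ρ) dominates r^μ for every weight μ majorized by λ.) -/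
open Finset

/-- If all initial `Iic`-partial sums agree, the functions agree. -/
lemma eq_of_Iic_sums_eq {d : ℕ} {μ lam : Fin d → ℕ}
    (h : ∀ c : Fin d, ∑ i ∈ Finset.Iic c, μ i = ∑ i ∈ Finset.Iic c, lam i) :
    μ = lam := by
  funext c
  have hIio : ∑ i ∈ Finset.Iio c, μ i = ∑ i ∈ Finset.Iio c, lam i := by
    rcases Nat.eq_zero_or_pos c.val with h0 | hpos
    · have : Finset.Iio c = ∅ := by
        ext k
        simp only [Finset.mem_Iio, Finset.notMem_empty, iff_false, Fin.lt_def]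
        omega
      simp [this]
    · have hlt : c.val - 1 < d := by omega
      have : Finset.Iio c = Finset.Iic ⟨c.val - 1, hlt⟩ := by
        ext k
        simp only [Finset.mem_Iio, Finset.mem_Iic, Fin.lt_def, Fin.le_def]
        omega
      rw [this]; exact h _
  have hc := h c
  rw [← Finset.Iio_insert, Finset.sum_insert (by simp),
      Finset.sum_insert (by simp)] at hc
  omega

lemma aux_monomial {d : ℕ} (r : Fin d → ℝ)
    (hr : Antitone r) (hr0 : ∀ i, 0 ≤ r i) :
    ∀ (N : ℕ) (μ lam : Fin d → ℕ),
      (∀ c : Fin d, ∑ i ∈ Finset.Iic c, μ i ≤ ∑ i ∈ Finset.Iic c, lam i) →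
      (∑ i, μ i = ∑ i, lam i) →
      (∑ c : Fin d, (∑ i ∈ Finset.Iic c, lam i - ∑ i ∈ Finset.Iic c, μ i) ≤ N) →
      ∏ i, r i ^ μ i ≤ ∏ i, r i ^ lam i := by
  intro N
  induction N with
  | zero =>
    intro μ lam hmaj hsum hN
    have heq : ∀ c : Fin d, ∑ i ∈ Finset.Iic c, μ i = ∑ i ∈ Finset.Iic c, lam i := by
      intro c
      have := Finset.sum_eq_zero_iff.mp (Nat.le_zero.mp hN) c (Finset.mem_univ c)
      have := hmaj c
      omega
    rw [eq_of_Iic_sums_eq heq]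
  | succ N ih =>
    intro μ lam hmaj hsum hN
    by_cases hall : ∀ c : Fin d, ∑ i ∈ Finset.Iic c, μ i = ∑ i ∈ Finset.Iic c, lam i
    · rw [eq_of_Iic_sums_eq hall]
    · -- there is some strict partial sum
      push_neg at hall
      have hneq : μ ≠ lam := by
        intro h; exact hall.elim fun c hc => hc (by rw [h])
      -- minimal index where μ ≠ lam
      have hne1 : ((Finset.univ.filter fun k => μ k ≠ lam k)).Nonempty := by
        obtain ⟨k, hk⟩ := Function.ne_iff.mp hneq
        exact ⟨k, by simp [hk]⟩
      set i := (Finset.univ.filter fun k => μ k ≠ lam k).min' hne1 with hi_def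
      have hi_mem : μ i ≠ lam i := by
        have := (Finset.univ.filter fun k => μ k ≠ lam k).min'_mem hne1
        simpa using this
      have hi_min : ∀ k : Fin d, k < i → μ k = lam k := by
        intro k hk
        by_contra hne
        exact absurd (Finset.min'_le _ k (by simp [hne])) (not_le.mpr hk)
      -- μ i < lam i
      have hIio_eq : ∑ k ∈ Finset.Iio i, μ k = ∑ k ∈ Finset.Iio i, lam k :=
        Finset.sum_congr rfl fun k hk => hi_min k (Finset.mem_Iio.mp hk)
      have hilt : μ i < lam i := by
        have := hmaj i
        rw [← Finset.Iio_insert, Finset.sum_insert (by simp),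
            Finset.sum_insert (by simp)] at this
        omega
      -- there is an index with lam < μ
      have hne2 : ((Finset.univ.filter fun k => lam k < μ k)).Nonempty := by
        by_contra hcon
        rw [Finset.not_nonempty_iff_eq_empty, Finset.filter_eq_empty_iff] at hcon
        have hle : ∀ k : Fin d, μ k ≤ lam k := fun k => by
          have := hcon (Finset.mem_univ k); omega
        have : ∑ k, μ k < ∑ k, lam k :=
          Finset.sum_lt_sum (fun k _ => hle k) ⟨i, Finset.mem_univ i, hilt⟩
        omega
      set j := (Finset.univ.filter fun k => lam k < μ k).min' hne2 with hj_def
      have hj_mem : lam j < μ j := by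
        have := (Finset.univ.filter fun k => lam k < μ k).min'_mem hne2
        simpa using this
      have hj_min : ∀ k : Fin d, k < j → μ k ≤ lam k := by
        intro k hk
        by_contra hne
        exact absurd (Finset.min'_le _ k (by simp; omega)) (not_le.mpr hk)
      have hij : i < j := by
        have hle : i ≤ j := Finset.min'_le _ j (by simp; omega)
        rcases lt_or_eq_of_le hle with h | h
        · exact h
        · rw [h] at hilt; omega
      -- strict majorization on [i, j)
      have hstrict : ∀ c : Fin d, i ≤ c → c < j →
          ∑ k ∈ Finset.Iic c, μ k < ∑ k ∈ Finset.Iic c, lam k := by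
        intro c hic hcj
        refine Finset.sum_lt_sum (fun k hk => hj_min k ?_) ⟨i, Finset.mem_Iic.mpr hic, hilt⟩
        exact lt_of_le_of_lt (Finset.mem_Iic.mp hk) hcj
      -- the new function
      set μ' := Function.update (Function.update μ j (μ j - 1)) i (μ i + 1) with hμ'
      have hijne : i ≠ j := ne_of_lt hij
      have hkey : ∀ k : Fin d,
          μ' k + (if k = j then 1 else 0) = μ k + (if k = i then 1 else 0) := by
        intro k
        rcases eq_or_ne k i with rfl | hki
        · simp [hμ', Function.update, hijne]
        · rcases eq_or_ne k j with rfl | hkj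
          · simp [hμ', Function.update, hijne.symm, hki]
            omega
          · simp [hμ', Function.update, hki, hkj]
      have hsum_key : ∀ s : Finset (Fin d),
          (∑ k ∈ s, μ' k) + (if j ∈ s then 1 else 0)
            = (∑ k ∈ s, μ k) + (if i ∈ s then 1 else 0) := by
        intro s
        have h1 : ∑ k ∈ s, (μ' k + if k = j then 1 else 0)
            = ∑ k ∈ s, (μ k + if k = i then 1 else 0) :=
          Finset.sum_congr rfl fun k _ => hkey k
        rw [Finset.sum_add_distrib, Finset.sum_add_distrib] at h1
        simpa using h1
      -- majorization for μ'
      have hmaj' : ∀ c : Fin d, ∑ k ∈ Finset.Iic c, μ' k ≤ ∑ k ∈ Finset.Iic c, lam k := by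
        intro c
        have h1 := hsum_key (Finset.Iic c)
        by_cases hic : i ≤ c
        · by_cases hjc : j ≤ c
          · simp only [Finset.mem_Iic, hic, hjc, if_pos] at h1
            have := hmaj c; omega
          · have := hstrict c hic (not_le.mp hjc)
            simp only [Finset.mem_Iic, hic, hjc, if_pos, if_neg] at h1
            omega
        · have hjc : ¬ j ≤ c := fun h => hic (le_trans (le_of_lt hij) h)
          simp only [Finset.mem_Iic, hic, hjc, if_neg] at h1
          have := hmaj c; omega
      -- total sum for μ'
      have hsum' : ∑ k, μ' k = ∑ k, lam k := by
        have h1 := hsum_key Finset.univ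
        simp only [Finset.mem_univ, if_pos] at h1
        omega
      -- the measure decreases
      have hSi : ∑ k ∈ Finset.Iic i, μ' k = ∑ k ∈ Finset.Iic i, μ k + 1 := by
        have h1 := hsum_key (Finset.Iic i)
        have hji : j ∉ Finset.Iic i := by simp [not_le.mpr hij]
        simp only [Finset.mem_Iic, le_refl, if_pos, hji, if_neg] at h1
        simpa using h1
      have hSile : ∑ k ∈ Finset.Iic i, μ k < ∑ k ∈ Finset.Iic i, lam k :=
        hstrict i le_rfl hij
      have hmono : ∀ c : Fin d, ∑ k ∈ Finset.Iic c, μ k ≤ ∑ k ∈ Finset.Iic c, μ' k := by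
        intro c
        have h1 := hsum_key (Finset.Iic c)
        by_cases hjc : j ∈ Finset.Iic c
        · have hic : i ∈ Finset.Iic c := by
            simp only [Finset.mem_Iic] at *
            exact le_trans (le_of_lt hij) hjc
          simp [hjc, hic] at h1; omega
        · by_cases hic : i ∈ Finset.Iic c
          · simp [hjc, hic] at h1; omega
          · simp [hjc, hic] at h1; omega
      have hmeas : ∑ c : Fin d, (∑ k ∈ Finset.Iic c, lam k - ∑ k ∈ Finset.Iic c, μ' k)
          < ∑ c : Fin d, (∑ k ∈ Finset.Iic c, lam k - ∑ k ∈ Finset.Iic c, μ k) := by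
        refine Finset.sum_lt_sum (fun c _ => ?_) ⟨i, Finset.mem_univ i, ?_⟩
        · have := hmono c; omega
        · have := hmaj' i
          omega
      -- product inequality: ∏ r^μ ≤ ∏ r^μ'
      have hμj1 : 1 ≤ μ j := by omega
      set A := Function.update μ j (μ j - 1) with hA
      have hP1 : ∏ k, r k ^ μ k = (∏ k, r k ^ A k) * r j := by
        rw [← Finset.mul_prod_erase Finset.univ (fun k => r k ^ μ k) (Finset.mem_univ j),
            ← Finset.mul_prod_erase Finset.univ (fun k => r k ^ A k) (Finset.mem_univ j)]
        have hcongr : ∏ k ∈ Finset.univ.erase j, r k ^ A k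
            = ∏ k ∈ Finset.univ.erase j, r k ^ μ k := by
          refine Finset.prod_congr rfl fun k hk => ?_
          have : k ≠ j := Finset.ne_of_mem_erase hk
          simp [hA, Function.update, this]
        rw [hcongr]
        have : A j = μ j - 1 := by simp [hA]
        rw [this]
        rw [mul_comm _ (r j), ← mul_assoc, mul_comm (r j), mul_assoc, mul_comm (r j)]
        ring_nf
        rw [← pow_succ' (r j) (μ j - 1)]
        congr 2
        omega
      have hP2 : ∏ k, r k ^ μ' k = (∏ k, r k ^ A k) * r i := by
        rw [← Finset.mul_prod_erase Finset.univ (fun k => r k ^ μ' k) (Finset.mem_univ i),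
            ← Finset.mul_prod_erase Finset.univ (fun k => r k ^ A k) (Finset.mem_univ i)]
        have hcongr : ∏ k ∈ Finset.univ.erase i, r k ^ A k
            = ∏ k ∈ Finset.univ.erase i, r k ^ μ' k := by
          refine Finset.prod_congr rfl fun k hk => ?_
          have : k ≠ i := Finset.ne_of_mem_erase hk
          simp [hμ', Function.update, this]
        rw [hcongr]
        have h1 : μ' i = A i + 1 := by simp [hμ', hA, Function.update, hijne]
        rw [h1, pow_succ]
        ring
      have hstep : ∏ k, r k ^ μ k ≤ ∏ k, r k ^ μ' k := by
        rw [hP1, hP2]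
        have hPnonneg : 0 ≤ ∏ k, r k ^ A k :=
          Finset.prod_nonneg fun k _ => pow_nonneg (hr0 k) _
        exact mul_le_mul_of_nonneg_left (hr (le_of_lt hij)) hPnonneg
      exact le_trans hstep (ih μ' lam hmaj' hsum' (by omega))

/-- **Monomials in a nonincreasing nonnegative vector are monotone under majorization of
the exponents.** If `μ ≺ λ` (all initial partial sums of `μ` are dominated by those of
`λ`, with equal total sums) and `r` is nonincreasing and nonnegative, then
`∏ i, (r i)^(μ i) ≤ ∏ i, (r i)^(λ i)`. -/
theorem monomial_le_of_majorized {d : ℕ} (r : Fin d → ℝ)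
    (hr : Antitone r) (hr0 : ∀ i, 0 ≤ r i)
    (μ lam : Fin d → ℕ)
    (hmaj : ∀ c : Fin d, ∑ i ∈ Finset.Iic c, μ i ≤ ∑ i ∈ Finset.Iic c, lam i)
    (hsum : ∑ i, μ i = ∑ i, lam i) :
    ∏ i, r i ^ μ i ≤ ∏ i, r i ^ lam i := by
  exact aux_monomial r hr hr0 _ μ lam hmaj hsum le_rfl
end
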